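/- Let X be a metric space such that for all y, z ∈ X and every ε > 0 there exists a continuous path from y to z of length less than dist(y, z) + ε. Let x ∈ X, r > 0 and ε > 0. Then every rectifiable loop γ based at x whose image is contained in the open ball B(x, r) is path-homotopic (rel endpoints) to a finite concatenation γ₁ · γ₂ ⋯ γₙ of loops based at x, each of length at most 2r + ε. -/

import Mathlib

open CategoryTheory

attribute [local instance] Path.Homotopic.setoid

/-- The length of a path in a metric space: the total variation of the map on `[0,1]`. -/
noncomputable def pathLength {X : Type*} [MetricSpace X] {y z : X} (σ : Path y z) : ENNReal :=
  eVariationOn σ.extend (Set.Icc 0 1)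

/-- The element of the fundamental group `π₁(X, x)` determined by a loop based at `x`. -/
noncomputable def loopClass {X : Type*} [TopologicalSpace X] {x : X} (γ : Path x x) :
    Aut (FundamentalGroupoid.mk x) where
  hom := (⟦γ⟧ : Path.Homotopic.Quotient x x)
  inv := CategoryTheory.Groupoid.inv (⟦γ⟧ : Path.Homotopic.Quotient x x)

/-- The `φ`-relative systole of `X` at `x`: the infimum of lengths of rectifiable loops
based at `x` whose path-homotopy class has nontrivial image under `φ`. -/
noncomputable def relSystole {X : Type*} [MetricSpace X] (x : X) {G : Type*} [Group G]
    (φ : Aut (FundamentalGroupoid.mk x) →* G) : ENNReal :=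
  ⨅ (γ : Path x x) (_ : pathLength γ ≠ ⊤ ∧ φ (loopClass γ) ≠ 1), pathLength γ

/-! Cut `γ` at parameters `0 = t₀ ≤ t₁ ≤ ⋯ ≤ t_N = 1` so finely that every piece `γ|[tᵢ, tᵢ₊₁]`
has length at most `ε / 2`; this is possible because the length of `γ|[0, t]` is a continuous,
hence uniformly continuous, function of `t`. Join `x` to each `γ tᵢ` by a path `σᵢ` of length at
most `r + ε / 4`, constant when `γ tᵢ = x`. The loops `σᵢ · γ|[tᵢ, tᵢ₊₁] · σᵢ₊₁⁻¹` have length at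
most `2r + ε`, and their product telescopes to `σ₀ · γ · σ_N⁻¹ = γ`. -/

open Set

theorem continuousOn_variationOnFromTo {α E : Type*} [LinearOrder α] [TopologicalSpace α]
    [OrderTopology α] [PseudoMetricSpace E] {f : α → E} {s : Set α}
    (hf : LocallyBoundedVariationOn f s) (hc : ContinuousOn f s) {a : α} (ha : a ∈ s) :
    ContinuousOn (variationOnFromTo f s a) s := by
  intro b hb
  rw [continuousWithinAt_iff_continuous_left'_right']
  constructor
  · simpa [ContinuousWithinAt] using
      variationOnFromTo.tendsto_left ha hb hf ((hc b hb).mono inter_subset_left)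
  · simpa [ContinuousWithinAt] using
      variationOnFromTo.tendsto_right ha hb hf ((hc b hb).mono inter_subset_left)

theorem IsCompact.exists_pos_forall_eVariationOn_inter_Icc_le {E : Type*} [PseudoMetricSpace E]
    {f : ℝ → E} {s : Set ℝ} (hs : IsCompact s) (hf : BoundedVariationOn f s)
    (hc : ContinuousOn f s) {δ : ℝ} (hδ : 0 < δ) :
    ∃ η > 0, ∀ u ∈ s, ∀ v ∈ s, u ≤ v → v - u < η →
      eVariationOn f (s ∩ Icc u v) ≤ ENNReal.ofReal δ := by
  rcases s.eq_empty_or_nonempty with rfl | ⟨a, ha⟩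
  · exact ⟨1, one_pos, by simp⟩
  have hV := hs.uniformContinuousOn_of_continuous
    (continuousOn_variationOnFromTo hf.locallyBoundedVariationOn hc ha)
  obtain ⟨η, hη, hVη⟩ := Metric.uniformContinuousOn_iff.mp hV δ hδ
  refine ⟨η, hη, fun u hu v hv huv hlt => ?_⟩
  have hsplit : variationOnFromTo f s a v - variationOnFromTo f s a u
      = (eVariationOn f (s ∩ Icc u v)).toReal := by
    rw [← variationOnFromTo.add hf.locallyBoundedVariationOn ha hu hv, add_sub_cancel_left,
      variationOnFromTo.eq_of_le f s huv]
  have hdist := hVη v hv u hu (by rwa [Real.dist_eq, abs_of_nonneg (by linarith)])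
  rw [← ENNReal.ofReal_toReal (hf.mono inter_subset_left), ← hsplit]
  exact ENNReal.ofReal_le_ofReal ((le_abs_self _).trans (Real.dist_eq _ _ ▸ hdist.le))

section PathLength

variable {X : Type*} [MetricSpace X] {x y z : X}

theorem pathLength_refl (x : X) : pathLength (Path.refl x) = 0 :=
  eVariationOn.constant_on fun _ ⟨_, _, ha⟩ _ ⟨_, _, hb⟩ => ha.symm.trans hb

theorem pathLength_symm (γ : Path x y) : pathLength γ.symm = pathLength γ := by
  rw [pathLength, Path.extend_symm, ← Function.comp_def γ.extend,
    eVariationOn.comp_eq_of_antitoneOn _ _ (fun _ _ _ _ h => sub_le_sub_left h 1),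
    image_const_sub_Icc, sub_zero, sub_self, pathLength]

theorem eVariationOn_le_pathLength (γ : Path x y) {f : ℝ → X} {s : Set ℝ} {φ : ℝ → ℝ}
    (hφ : MonotoneOn φ s) (hmaps : MapsTo φ s (Icc 0 1)) (hf : EqOn f (γ.extend ∘ φ) s) :
    eVariationOn f s ≤ pathLength γ :=
  (eVariationOn.eq_of_eqOn hf).trans_le (eVariationOn.comp_le_of_monotoneOn _ φ hφ hmaps)

theorem pathLength_trans_le (p : Path x y) (q : Path y z) :
    pathLength (p.trans q) ≤ pathLength p + pathLength q := by
  rw [pathLength, ← inter_self (Icc (0 : ℝ) 1), ← eVariationOn.Icc_add_Icc _ (b := 1 / 2)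
    (by norm_num) (by norm_num) (by norm_num)]
  refine add_le_add (eVariationOn_le_pathLength p (φ := (2 * ·)) ?_ ?_ ?_)
    (eVariationOn_le_pathLength q (φ := (2 * · - 1)) ?_ ?_ ?_)
  · exact fun a _ b _ h => by linarith
  · exact fun a ⟨⟨ha, _⟩, _, ha'⟩ => ⟨by linarith, by linarith⟩
  · exact fun a ⟨_, _, ha⟩ => Path.extend_trans_of_le_half p q ha
  · exact fun a _ b _ h => by linarith
  · exact fun a ⟨⟨_, ha⟩, ha', _⟩ => ⟨by linarith, by linarith⟩
  · exact fun a ⟨_, ha, _⟩ => Path.extend_trans_of_half_le p q ha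

theorem pathLength_subpath_le (γ : Path x y) {u v : unitInterval} (huv : u ≤ v) :
    pathLength (γ.subpath u v) ≤ eVariationOn γ.extend (Icc 0 1 ∩ Icc (u : ℝ) v) := by
  have hEq : EqOn (γ.subpath u v).extend (γ.extend ∘ fun s => (1 - s) * u + s * v) (Icc 0 1) :=
    fun s hs => by
      rw [Path.extend_apply _ hs, Function.comp_apply, ← Icc.coe_convexComb u v ⟨s, hs⟩,
        Path.extend_extends']
      rfl
  refine (eVariationOn.eq_of_eqOn hEq).trans_le (eVariationOn.comp_le_of_monotoneOn _ _ ?_ ?_)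
  · exact fun a _ b _ h => by nlinarith [Subtype.coe_le_coe.mpr huv]
  · intro s hs
    show ((Icc.convexComb u v ⟨s, hs⟩ : unitInterval) : ℝ) ∈ _
    exact ⟨(Icc.convexComb u v ⟨s, hs⟩).2, Icc.le_convexComb huv _, Icc.convexComb_le huv _⟩

theorem Path.exists_pos_forall_pathLength_subpath_le (γ : Path x y) (hγ : pathLength γ ≠ ⊤)
    {δ : ℝ} (hδ : 0 < δ) :
    ∃ η > 0, ∀ u v : unitInterval, dist u v < η →
      pathLength (γ.subpath u v) ≤ ENNReal.ofReal δ := by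
  obtain ⟨η, hη, hvar⟩ := isCompact_Icc.exists_pos_forall_eVariationOn_inter_Icc_le hγ
    γ.continuous_extend.continuousOn hδ
  refine ⟨η, hη, fun u v huv => ?_⟩
  wlog hle : u ≤ v generalizing u v
  · rw [← Path.symm_subpath, pathLength_symm]
    exact this v u (dist_comm u v ▸ huv) (le_of_not_ge hle)
  refine (pathLength_subpath_le γ hle).trans (hvar u u.2 v v.2 hle ?_)
  rwa [Subtype.dist_eq, dist_comm, Real.dist_eq,
    abs_of_nonneg (sub_nonneg.mpr (Subtype.coe_le_coe.mpr hle))] at huv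

end PathLength

theorem exists_path_pathLength_le_and_eq_refl {X : Type*} [MetricSpace X]
    (hconn : ∀ y z : X, ∀ ε : ℝ, 0 < ε →
      ∃ σ : Path y z, pathLength σ < ENNReal.ofReal (dist y z + ε))
    (x y : X) {δ : ℝ} (hδ : 0 < δ) :
    ∃ σ : Path x y, pathLength σ ≤ ENNReal.ofReal (dist x y + δ) ∧
      ∀ h : y = x, σ = (Path.refl x).cast rfl h := by
  by_cases h : y = x
  · subst h
    exact ⟨Path.refl y, (pathLength_refl y).trans_le bot_le, fun _ => rfl⟩
  · obtain ⟨σ, hσ⟩ := hconn x y δ hδ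
    exact ⟨σ, hσ.le, fun h' => absurd h' h⟩

namespace Path.Homotopic.Quotient

variable {X : Type*} [TopologicalSpace X]

/-- `b i` is a path class from `p i` to a common endpoint; it stands in for the product
`a i ⋯ a (n - 1)`, whose factors have dependent types, as `(b i).trans (b n).symm`. -/
theorem foldr_range_trans_telescope {x y : X} (n : ℕ) {p : ℕ → X}
    (s : ∀ i, Homotopic.Quotient x (p i)) (a : ∀ i, Homotopic.Quotient (p i) (p (i + 1)))
    (b : ∀ i, Homotopic.Quotient (p i) y)
    (hab : ∀ i, (a i).trans (b (i + 1)) = b i) :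
    (List.range n).foldr (fun i q => ((s i).trans ((a i).trans (s (i + 1)).symm)).trans q)
        (refl x) = (s 0).trans ((b 0).trans ((b n).symm.trans (s n).symm)) := by
  induction n generalizing p with
  | zero =>
    rw [List.range_zero, List.foldr_nil, ← trans_assoc (b 0), trans_symm, refl_trans, trans_symm]
  | succ n ih =>
    rw [List.range_succ_eq_map, List.foldr_cons, List.foldr_map,
      ih (fun i => s (i + 1)) (fun i => a (i + 1)) (fun i => b (i + 1)) (fun i => hab (i + 1)),
      ← hab 0]
    simp only [trans_assoc]
    rw [← trans_assoc (s 1).symm, symm_trans, refl_trans]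

theorem refl_cast_trans_cast_trans_symm {x y x' y' : X} (q : Homotopic.Quotient x y) (hx : x' = x)
    (hy : y' = y) :
    ((refl x).cast rfl hx).trans ((q.cast hx hy).trans ((refl y).cast rfl hy).symm) = q := by
  subst hx hy
  simp only [cast_rfl_rfl, refl_trans]
  rw [← mk_refl, ← mk_symm, Path.refl_symm, mk_refl, trans_refl]

theorem mk_refl_cast_trans_subpath_trans_symm {x y : X} (γ : Path x y) {u v : unitInterval}
    (hu : u = 0) (hv : v = 1) (hx : γ u = x) (hy : γ v = y) :
    (mk ((Path.refl x).cast rfl hx)).trans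
      ((mk (γ.subpath u v)).trans (mk ((Path.refl y).cast rfl hy)).symm) = mk γ := by
  subst hu hv
  rw [Path.subpath_zero_one]
  exact refl_cast_trans_cast_trans_symm (mk γ) hx hy

end Path.Homotopic.Quotient

section SubpathLoop

variable {X : Type*} {x y z : X}

noncomputable def Path.subpathLoop [TopologicalSpace X] (γ : Path y z) (t : ℕ → unitInterval)
    (σ : ∀ i, Path x (γ (t i))) (i : ℕ) : Path x x :=
  (σ i).trans ((γ.subpath (t i) (t (i + 1))).trans (σ (i + 1)).symm)

theorem pathLength_subpathLoop_le [MetricSpace X] (γ : Path y z) (t : ℕ → unitInterval)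
    (σ : ∀ i, Path x (γ (t i))) (i : ℕ) :
    pathLength (γ.subpathLoop t σ i) ≤
      pathLength (σ i) + pathLength (γ.subpath (t i) (t (i + 1))) + pathLength (σ (i + 1)) := by
  grw [Path.subpathLoop, pathLength_trans_le, pathLength_trans_le, pathLength_symm, add_assoc]

theorem Path.Homotopic.Quotient.foldr_map_subpathLoop [TopologicalSpace X] (γ : Path y z)
    (t : ℕ → unitInterval) (σ : ∀ i, Path x (γ (t i))) (n : ℕ) :
    ((List.range n).map (γ.subpathLoop t σ)).foldr (fun l q => (mk l).trans q) (refl x) =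
      (mk (σ 0)).trans ((mk (γ.subpath (t 0) (t n))).trans (mk (σ n)).symm) := by
  rw [List.foldr_map]
  refine (foldr_range_trans_telescope n (fun i => mk (σ i))
    (fun i => mk (γ.subpath (t i) (t (i + 1)))) (fun i => mk (γ.subpath (t i) (t n)))
    fun i => Quotient.sound ⟨Path.Homotopy.subpathTransSubpath γ _ _ _⟩).trans ?_
  rw [Path.subpath_self, ← mk_symm (Path.refl _), Path.refl_symm, mk_refl, refl_trans]

end SubpathLoop

theorem unitInterval.exists_seq_dist_succ_lt {η : ℝ} (hη : 0 < η) :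
    ∃ (t : ℕ → unitInterval) (N : ℕ), 0 < N ∧ t 0 = 0 ∧ t N = 1 ∧
      ∀ i, dist (t i) (t (i + 1)) < η := by
  obtain ⟨N, hN⟩ := Icc.addNSMul_eq_right zero_le_one (half_pos hη)
  refine ⟨Icc.addNSMul zero_le_one (η / 2), N + 1, N.succ_pos, Subtype.ext (Icc.addNSMul_zero _),
    Subtype.ext (hN _ N.le_succ), fun i => ?_⟩
  rw [Subtype.dist_eq, Real.dist_eq, abs_sub_comm]
  exact (Icc.abs_sub_addNSMul_le zero_le_one (half_pos hη).le i
    ⟨Icc.monotone_addNSMul _ (half_pos hη).le i.le_succ, le_rfl⟩).trans_lt (half_lt_self hη)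

/-- Every rectifiable loop `γ` based at `x` whose image lies in the open ball `B(x, r)`
is path-homotopic (rel endpoints) to a finite concatenation `γ₁ · γ₂ ⋯ γₙ` of loops based
at `x`, each of length at most `2r + ε`.  (`X` is assumed to be such that any two points
can be joined by paths of length arbitrarily close to their distance.) -/
theorem loop_in_ball_decomposes_into_short_loops {X : Type*} [MetricSpace X]
    (hconn : ∀ y z : X, ∀ ε : ℝ, 0 < ε →
      ∃ σ : Path y z, pathLength σ < ENNReal.ofReal (dist y z + ε))
    (x : X) (r ε : ℝ) (hr : 0 < r) (hε : 0 < ε)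
    (γ : Path x x) (hrect : pathLength γ ≠ ⊤)
    (him : Set.range ⇑γ ⊆ Metric.ball x r) :
    ∃ l : List (Path x x), l ≠ [] ∧
      (∀ σ ∈ l, pathLength σ ≤ ENNReal.ofReal (2 * r + ε)) ∧
      (⟦γ⟧ : Path.Homotopic.Quotient x x) =
        l.foldr (fun σ q => Path.Homotopic.Quotient.trans (⟦σ⟧ : Path.Homotopic.Quotient x x) q)
          (⟦Path.refl x⟧ : Path.Homotopic.Quotient x x) := by
  obtain ⟨η, hη, hpiece⟩ := γ.exists_pos_forall_pathLength_subpath_le hrect (half_pos hε)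
  obtain ⟨t, N, hN, ht0, htN, ht⟩ := unitInterval.exists_seq_dist_succ_lt hη
  choose σ hσ hσx using fun i =>
    exists_path_pathLength_le_and_eq_refl hconn x (γ (t i)) (by positivity : (0 : ℝ) < ε / 4)
  have hσr : ∀ i, pathLength (σ i) ≤ ENNReal.ofReal (r + ε / 4) := fun i =>
    (hσ i).trans (ENNReal.ofReal_le_ofReal (by
      have := him ⟨t i, rfl⟩
      rw [Metric.mem_ball, dist_comm] at this
      linarith))
  refine ⟨(List.range N).map (γ.subpathLoop t σ), by simpa using hN.ne', ?_, ?_⟩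
  · simp only [List.mem_map, List.mem_range]
    rintro _ ⟨i, -, rfl⟩
    calc _ ≤ ENNReal.ofReal (r + ε / 4) + ENNReal.ofReal (ε / 2)
          + ENNReal.ofReal (r + ε / 4) := by
          grw [pathLength_subpathLoop_le, hσr i, hpiece _ _ (ht i), hσr (i + 1)]
      _ = ENNReal.ofReal (2 * r + ε) := by
          rw [← ENNReal.ofReal_add (by positivity) (by positivity),
            ← ENNReal.ofReal_add (by positivity) (by positivity)]
          ring_nf
  · have hx0 : γ (t 0) = x := ht0 ▸ γ.source
    have hxN : γ (t N) = x := htN ▸ γ.target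
    refine Eq.symm ((Path.Homotopic.Quotient.foldr_map_subpathLoop γ t σ N).trans ?_)
    rw [hσx 0 hx0, hσx N hxN]
    exact Path.Homotopic.Quotient.mk_refl_cast_trans_subpath_trans_symm γ ht0 htN hx0 hxN
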